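/- Let B be the symmetric bilinear form on Iuₙ determined on basis elements by B(x_{ij}, x_{ji}) = 1 for all i ≠ j, B(a_i, b_j) = B(b_j, a_i) = 2δ_{ij}, and B = 0 on all other pairs of basis elements. Then B is nondegenerate and invariant: B([u, v], w) = B(u, [v, w]) for all u, v, w ∈ Iuₙ. -/

import Mathlib

/-- Index set for the basis of `Iuₙ`: the off-diagonal pairs indexing the `x_{ij}` (`i ≠ j`),
then the `a_i`'s, then the `b_i`'s. -/
abbrev IuIdx (n : ℕ) : Type := { p : Fin n × Fin n // p.1 ≠ p.2 } ⊕ (Fin n ⊕ Fin n)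

/-- `Iuₙ`: the free `K`-vector space on the basis `{x_{ij} : i ≠ j} ∪ {a_i} ∪ {b_i}`. -/
abbrev Iu (n : ℕ) (K : Type*) [Field K] : Type _ := IuIdx n →₀ K

variable (n : ℕ) (K : Type*) [Field K]

/-- The basis element `x_{ij}` (`i ≠ j`). -/
noncomputable def xE (i j : Fin n) (h : i ≠ j) : Iu n K :=
  Finsupp.single (Sum.inl ⟨(i, j), h⟩) 1

/-- The basis element `a_i`. -/
noncomputable def aE (i : Fin n) : Iu n K := Finsupp.single (Sum.inr (Sum.inl i)) 1

/-- The basis element `b_i`. -/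
noncomputable def bE (i : Fin n) : Iu n K := Finsupp.single (Sum.inr (Sum.inr i)) 1

/-- `x_{ij}` as a total function (junk value `0` when `i = j`). -/
noncomputable def xe (i j : Fin n) : Iu n K := if h : i ≠ j then xE n K i j h else 0

/-- The length `λ(i,j)`: equals `j - i` if `i < j`, and `n - (i - j)` if `i > j`. -/
def lam (n : ℕ) (i j : Fin n) : ℕ := (j - i : Fin n).val

/-- The bracket of `Iuₙ` on basis elements:
`[x_{ij}, x_{kl}] = δ_{jk} x_{il} - δ_{li} x_{kj}` if `λ(i,j) + λ(k,l) < n` and `0` otherwise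
(unless both `j = k` and `l = i`); `[x_{ij}, x_{ji}] = ½(b_i - b_j)`;
`[a_i, x_{jk}] = (δ_{ij} - δ_{ik}) x_{jk}`; `[b_i, x_{jk}] = 0`;
`[a_i, a_j] = [b_i, b_j] = [a_i, b_j] = 0`; extended antisymmetrically. -/
noncomputable def bb : IuIdx n → IuIdx n → Iu n K
  | Sum.inl ⟨(i, j), _⟩, Sum.inl ⟨(k, l), _⟩ =>
      if k = j ∧ l = i then ((2 : K)⁻¹) • (bE n K i - bE n K j)
      else if lam n i j + lam n k l < n then
        (if j = k then xe n K i l else 0) - (if l = i then xe n K k j else 0)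
      else 0
  | Sum.inr (Sum.inl i), Sum.inl ⟨(j, k), _⟩ =>
      (((if i = j then 1 else 0) : K) - ((if i = k then 1 else 0) : K)) • xe n K j k
  | Sum.inl ⟨(j, k), _⟩, Sum.inr (Sum.inl i) =>
      -((((if i = j then 1 else 0) : K) - ((if i = k then 1 else 0) : K)) • xe n K j k)
  | _, _ => 0

/-- The bilinear bracket of `Iuₙ`, extended bilinearly from its values on basis elements. -/
noncomputable def br : Iu n K →ₗ[K] Iu n K →ₗ[K] Iu n K :=
  Finsupp.lift (Iu n K →ₗ[K] Iu n K) K (IuIdx n) fun s =>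
    Finsupp.lift (Iu n K) K (IuIdx n) fun t => bb n K s t

/-- The symmetric bilinear form `B` on basis elements: `B(x_{ij}, x_{ji}) = 1`,
`B(a_i, b_j) = B(b_j, a_i) = 2 δ_{ij}`, and `B = 0` on all other pairs. -/
noncomputable def bf : IuIdx n → IuIdx n → K
  | Sum.inl ⟨(i, j), _⟩, Sum.inl ⟨(k, l), _⟩ => if k = j ∧ l = i then 1 else 0
  | Sum.inr (Sum.inl i), Sum.inr (Sum.inr j) => if i = j then 2 else 0
  | Sum.inr (Sum.inr i), Sum.inr (Sum.inl j) => if i = j then 2 else 0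
  | _, _ => 0

/-- The bilinear form `B`, extended bilinearly from basis elements. -/
noncomputable def Bform : Iu n K →ₗ[K] Iu n K →ₗ[K] K :=
  Finsupp.lift (Iu n K →ₗ[K] K) K (IuIdx n) fun s =>
    Finsupp.lift K K (IuIdx n) fun t => bf n K s t

/-! `B` pairs each basis vector `e_s` only with its dual `e_{s*}` (`x_{ij} ↔ x_{ji}`, `a_i ↔ b_i`),
with weight `c_s = s.pairing K ∈ {1, 2}`, so it is nondegenerate as soon as `2 ≠ 0`. Invariance
is trilinear, so it suffices to check it on basis vectors, where `B([e_s, e_t], e_r) =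
c_r [e_s, e_t]_{r*}` must be invariant under rotating `(s, t, r)`. Apart from bookkeeping with
`½ (b_i - b_j)`, the only real case is three `x`'s around a triangle `i → j → l → i`: the
truncation conditions `λ(i,j) + λ(j,l) < n` and `λ(j,l) + λ(l,i) < n` both say
`λ(i,j) + λ(j,l) + λ(l,i) = n`, i.e. that `i, j, l` are in cyclic order. -/

variable {n K}

def IuIdx.dual : IuIdx n → IuIdx n
  | Sum.inl ⟨(i, j), h⟩ => Sum.inl ⟨(j, i), h.symm⟩
  | Sum.inr (Sum.inl i) => Sum.inr (Sum.inr i)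
  | Sum.inr (Sum.inr i) => Sum.inr (Sum.inl i)

def IuIdx.pairing (K : Type*) [Field K] : IuIdx n → K
  | Sum.inl _ => 1
  | Sum.inr _ => 2

@[simp] lemma IuIdx.dual_dual (s : IuIdx n) : s.dual.dual = s := by
  rcases s with ⟨⟨i, j⟩, h⟩ | i | i <;> rfl

@[simp] lemma IuIdx.pairing_dual (s : IuIdx n) : s.dual.pairing K = s.pairing K := by
  rcases s with ⟨⟨i, j⟩, h⟩ | i | i <;> rfl

lemma IuIdx.eq_dual_comm (s t : IuIdx n) : s = t.dual ↔ s.dual = t := by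
  constructor <;> rintro rfl <;> simp

lemma IuIdx.pairing_ne_zero (hK : (2 : K) ≠ 0) (s : IuIdx n) : s.pairing K ≠ 0 := by
  rcases s with ⟨⟨i, j⟩, h⟩ | i | i
  exacts [one_ne_zero, hK, hK]

lemma bf_eq_ite (s t : IuIdx n) : bf n K s t = if s = t.dual then t.pairing K else 0 := by
  rcases s with ⟨⟨i, j⟩, hij⟩ | i | i <;> rcases t with ⟨⟨k, l⟩, hkl⟩ | k | k <;>
    simp [bf, IuIdx.dual, IuIdx.pairing, eq_comm, and_comm]

lemma Bform_single_right (u : Iu n K) (t : IuIdx n) :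
    Bform n K u (Finsupp.single t 1) = t.pairing K * u t.dual := by
  simp [Bform, Finsupp.lift_apply, bf_eq_ite, Finsupp.sum, mul_comm, imp_or]

lemma Bform_single_left (s : IuIdx n) (v : Iu n K) :
    Bform n K (Finsupp.single s 1) v = s.pairing K * v s.dual := by
  simp [Bform, Finsupp.lift_apply, bf_eq_ite, Finsupp.sum, mul_comm, IuIdx.eq_dual_comm, imp_or]

lemma Bform_separatingLeft (hK : (2 : K) ≠ 0) : (Bform n K).SeparatingLeft := by
  intro u hu
  ext t
  have h := hu (Finsupp.single t.dual 1)
  rw [Bform_single_right, IuIdx.dual_dual] at h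
  simpa [IuIdx.pairing_ne_zero hK] using h

lemma lam_of_le {i j : Fin n} (h : i ≤ j) : lam n i j = j - i := Fin.coe_sub_iff_le.2 h

lemma lam_of_lt {i j : Fin n} (h : j < i) : lam n i j = n + j - i := Fin.coe_sub_iff_lt.2 h

lemma lam_add_lam_lt_iff_rotate {a b c : Fin n} (hab : a ≠ b) (hbc : b ≠ c) (hca : c ≠ a) :
    lam n a b + lam n b c < n ↔ lam n b c + lam n c a < n := by
  have hab : (a : ℕ) ≠ b := Fin.val_ne_of_ne hab
  have hbc : (b : ℕ) ≠ c := Fin.val_ne_of_ne hbc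
  have hca : (c : ℕ) ≠ a := Fin.val_ne_of_ne hca
  have := a.isLt; have := b.isLt; have := c.isLt
  rcases le_or_gt a b with h₁ | h₁ <;> rcases le_or_gt b c with h₂ | h₂ <;>
    rcases le_or_gt c a with h₃ | h₃ <;>
    simp only [lam_of_le, lam_of_lt, h₁, h₂, h₃] <;> omega

@[simp] lemma xe_apply_inl (i j p q : Fin n) (hpq : p ≠ q) :
    xe n K i j (Sum.inl ⟨(p, q), hpq⟩) = if i = p ∧ j = q then 1 else 0 := by
  by_cases h : i = j
  · subst h
    simp only [xe, ne_eq, not_true_eq_false, dite_false, Finsupp.coe_zero, Pi.zero_apply]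
    exact (if_neg fun ⟨hp, hq⟩ => hpq (hp ▸ hq)).symm
  · simp [xe, xE, h, Finsupp.single_apply]

@[simp] lemma xe_apply_inr (i j : Fin n) (m : Fin n ⊕ Fin n) : xe n K i j (Sum.inr m) = 0 := by
  by_cases h : i = j <;> simp [xe, xE, h]

@[simp] lemma bE_apply (i : Fin n) (s : IuIdx n) :
    bE n K i s = if s = Sum.inr (Sum.inr i) then 1 else 0 := by
  simp [bE, Finsupp.single_apply, eq_comm]

lemma bb_xx_apply_inl (i j k l p q : Fin n) (hij : i ≠ j) (hkl : k ≠ l) (hpq : p ≠ q) :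
    bb n K (Sum.inl ⟨(i, j), hij⟩) (Sum.inl ⟨(k, l), hkl⟩) (Sum.inl ⟨(p, q), hpq⟩) =
      if k = j ∧ l = i then 0
      else if lam n i j + lam n k l < n then
        (if j = k ∧ i = p ∧ l = q then 1 else 0) - (if l = i ∧ k = p ∧ j = q then 1 else 0)
      else 0 := by
  simp only [bb]
  split_ifs <;> simp_all

lemma bb_xx_apply_inr_inl (i j k l m : Fin n) (hij : i ≠ j) (hkl : k ≠ l) :
    bb n K (Sum.inl ⟨(i, j), hij⟩) (Sum.inl ⟨(k, l), hkl⟩) (Sum.inr (Sum.inl m)) = 0 := by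
  simp only [bb]
  split_ifs <;> simp

lemma bb_xx_apply_inr_inr (i j k l m : Fin n) (hij : i ≠ j) (hkl : k ≠ l) :
    bb n K (Sum.inl ⟨(i, j), hij⟩) (Sum.inl ⟨(k, l), hkl⟩) (Sum.inr (Sum.inr m)) =
      if k = j ∧ l = i then 2⁻¹ * ((if m = i then 1 else 0) - (if m = j then 1 else 0))
      else 0 := by
  simp only [bb]
  split_ifs <;> simp_all

lemma bb_xx_apply_inl_rotate (i j k l p q : Fin n) (hij : i ≠ j) (hkl : k ≠ l) (hpq : p ≠ q) :
    bb n K (Sum.inl ⟨(i, j), hij⟩) (Sum.inl ⟨(k, l), hkl⟩) (Sum.inl ⟨(q, p), hpq.symm⟩) =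
      bb n K (Sum.inl ⟨(k, l), hkl⟩) (Sum.inl ⟨(p, q), hpq⟩) (Sum.inl ⟨(j, i), hij.symm⟩) := by
  rw [bb_xx_apply_inl, bb_xx_apply_inl]
  by_cases h₁ : j = k ∧ i = q ∧ l = p
  · obtain ⟨rfl, rfl, rfl⟩ := h₁
    simp [hij, hkl, hpq, hij.symm, hkl.symm, lam_add_lam_lt_iff_rotate hij hkl hpq]
  by_cases h₂ : l = i ∧ k = q ∧ j = p
  · obtain ⟨rfl, rfl, rfl⟩ := h₂
    simp [hij, hkl, hpq, hij.symm, hkl.symm, hpq.symm, add_comm,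
      lam_add_lam_lt_iff_rotate hpq hkl hij]
  grind

lemma pairing_mul_bb_dual_rotate (hK : (2 : K) ≠ 0) (s t r : IuIdx n) :
    r.pairing K * bb n K s t r.dual = s.pairing K * bb n K t r s.dual := by
  rcases s with ⟨⟨i, j⟩, hij⟩ | i | i <;> rcases t with ⟨⟨k, l⟩, hkl⟩ | k | k <;>
    rcases r with ⟨⟨p, q⟩, hpq⟩ | p | p <;>
    simp [bb.eq_2, bb.eq_3, bb.eq_4, IuIdx.dual, IuIdx.pairing, bb_xx_apply_inr_inl,
      bb_xx_apply_inr_inr]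
  -- left: three `x`'s, and one `a_m` with `x_{ij}`, `x_{ji}` (where `2 * 2⁻¹ = 1` is needed)
  case inl.inl.inl => exact bb_xx_apply_inl_rotate i j k l p q hij hkl hpq
  all_goals grind

lemma br_single_single (s t : IuIdx n) :
    br n K (Finsupp.single s 1) (Finsupp.single t 1) = bb n K s t := by
  simp [br]

lemma Bform_br_single (hK : (2 : K) ≠ 0) (s t r : IuIdx n) :
    Bform n K (br n K (Finsupp.single s 1) (Finsupp.single t 1)) (Finsupp.single r 1) =
      Bform n K (Finsupp.single s 1) (br n K (Finsupp.single t 1) (Finsupp.single r 1)) := by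
  rw [br_single_single, br_single_single, Bform_single_right, Bform_single_left]
  exact pairing_mul_bb_dual_rotate hK s t r

lemma Bform_br (hK : (2 : K) ≠ 0) (u v w : Iu n K) :
    Bform n K (br n K u v) w = Bform n K u (br n K v w) := by
  induction u using Finsupp.induction_linear with
  | zero => simp
  | add u₁ u₂ h₁ h₂ => simp [h₁, h₂]
  | single s a =>
    induction v using Finsupp.induction_linear with
    | zero => simp
    | add v₁ v₂ h₁ h₂ => simp [h₁, h₂]
    | single t b =>
      induction w using Finsupp.induction_linear with
      | zero => simp
      | add w₁ w₂ h₁ h₂ => simp [h₁, h₂]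
      | single r c =>
        simp only [← Finsupp.smul_single_one _ a, ← Finsupp.smul_single_one _ b,
          ← Finsupp.smul_single_one _ c, map_smul, LinearMap.smul_apply, Bform_br_single hK]

theorem stmt14 (n : ℕ) (K : Type*) [Field K] (hK : (2 : K) ≠ 0) :
    (∀ u : Iu n K, (∀ v : Iu n K, Bform n K u v = 0) → u = 0) ∧
    (∀ u v w : Iu n K, Bform n K (br n K u v) w = Bform n K u (br n K v w)) :=
  ⟨Bform_separatingLeft hK, Bform_br hK⟩
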